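/- Suppose f: [0,1] → ℝ is nonnegative and satisfies f(√(x²+y²)) ≥ f(x) + f(y) for all x, y ≥ 0 with x²+y² ≤ 1. Then for every μ ≥ 1 and x ≥ y ≥ 0 with x²+y² ≤ 1 and f(x) > 0, f(√(x²+y²))^μ ≥ f(x)^μ + (μ²/(μ+1))·f(x)^(μ−1)·f(y) + (2^μ − μ²/(μ+1) − 1)·f(y)^μ. -/

import Mathlib

/-!
Superadditivity along `√(x² + y²)` with nonnegativity makes `f` monotone on `[0, 1]`, so with
`a = f x ≥ b = f y ≥ 0` it suffices to bound `(a + b) ^ μ` from below. Dividing by `a ^ μ` leaves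
the refined binomial inequality in `t = b / a ∈ [0, 1]`: the ratio
`((1 + t) ^ μ - 1 - μ² / (μ + 1) t) / t ^ μ` is decreasing on `(0, 1]`, because the sign of its
derivative reduces to the Bernoulli-type bound `(1 + t) ^ p ≥ 1 + p (p + 1) / (p + 2) t`
for `p = μ - 1`; so it is at least its value `2 ^ μ - 1 - μ² / (μ + 1)` at `t = 1`.
-/

open Real Set

lemma mul_div_le_two_rpow_sub_one {p : ℝ} (hp0 : 0 ≤ p) (hp1 : p ≤ 1) :
    p * (p + 1) / (p + 2) ≤ 2 ^ p - 1 := by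
  -- `2 ^ p ≥ 1 + p log 2` and `(p + 1) / (p + 2) ≤ 2 / 3 < log 2`
  have h2p : 1 + p * log 2 ≤ (2 : ℝ) ^ p := by
    rw [rpow_def_of_pos two_pos, mul_comm]
    exact add_one_le_exp _ |>.trans' (by linarith)
  have hlog : p + 1 ≤ log 2 * (p + 2) := by nlinarith [log_two_gt_d9]
  rw [div_le_iff₀ (by linarith)]
  nlinarith

lemma one_add_mul_le_one_add_rpow_of_le_one {p t : ℝ} (hp0 : 0 ≤ p) (hp1 : p ≤ 1)
    (ht0 : 0 ≤ t) (ht1 : t ≤ 1) : 1 + (2 ^ p - 1) * t ≤ (1 + t) ^ p := by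
  have chord := (concaveOn_rpow hp0 hp1).2 (mem_Ici.2 zero_le_one) (mem_Ici.2 zero_le_two)
    (sub_nonneg.2 ht1) ht0 (sub_add_cancel 1 t)
  simp only [smul_eq_mul, one_rpow, show (1 - t) * 1 + t * 2 = 1 + t by ring] at chord
  linarith

lemma one_add_mul_div_le_one_add_rpow {p t : ℝ} (hp : 0 ≤ p) (ht0 : 0 ≤ t) (ht1 : t ≤ 1) :
    1 + p * (p + 1) / (p + 2) * t ≤ (1 + t) ^ p := by
  rcases le_total 1 p with hp1 | hp1
  · have hcoef : p * (p + 1) / (p + 2) ≤ p := by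
      rw [div_le_iff₀ (by linarith)]; nlinarith
    have := one_add_mul_self_le_rpow_one_add (by linarith : (-1 : ℝ) ≤ t) hp1
    nlinarith
  · have := one_add_mul_le_one_add_rpow_of_le_one hp hp1 ht0 ht1
    nlinarith [mul_div_le_two_rpow_sub_one hp hp1]

noncomputable def refinedBinomialRatio (μ s : ℝ) : ℝ :=
  ((1 + s) ^ μ - 1 - μ ^ 2 / (μ + 1) * s) / s ^ μ

lemma hasDerivAt_refinedBinomialRatio (μ : ℝ) {s : ℝ} (hs : 0 < s) :
    HasDerivAt (refinedBinomialRatio μ)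
      (s ^ (μ - 1) * (μ ^ 2 / (μ + 1) * (μ - 1) * s - μ * ((1 + s) ^ (μ - 1) - 1)) / (s ^ μ) ^ 2)
      s := by
  have h1s : 0 < 1 + s := by linarith
  have hnum : HasDerivAt (fun s : ℝ => (1 + s) ^ μ - 1 - μ ^ 2 / (μ + 1) * s)
      (1 * μ * (1 + s) ^ (μ - 1) - μ ^ 2 / (μ + 1) * 1) s :=
    ((((hasDerivAt_id s).const_add 1).rpow_const (.inl h1s.ne')).sub_const 1).sub
      ((hasDerivAt_id s).const_mul _)
  have hden : HasDerivAt (fun s : ℝ => s ^ μ) (1 * μ * s ^ (μ - 1)) s :=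
    (hasDerivAt_id s).rpow_const (.inl hs.ne')
  refine (hnum.div hden (rpow_pos_of_pos hs μ).ne').congr_deriv ?_
  rw [rpow_sub_one hs.ne', rpow_sub_one h1s.ne']
  field_simp
  ring

lemma antitoneOn_refinedBinomialRatio {μ : ℝ} (hμ : 1 ≤ μ) :
    AntitoneOn (refinedBinomialRatio μ) (Ioc 0 1) := by
  refine antitoneOn_of_deriv_nonpos (convex_Ioc 0 1)
    (fun s hs => (hasDerivAt_refinedBinomialRatio μ hs.1).continuousAt.continuousWithinAt)
    (fun s hs => (hasDerivAt_refinedBinomialRatio μ (interior_subset hs).1)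
      |>.differentiableAt.differentiableWithinAt) fun s hs => ?_
  rw [interior_Ioc] at hs
  rw [(hasDerivAt_refinedBinomialRatio μ hs.1).deriv]
  have hbern := one_add_mul_div_le_one_add_rpow (sub_nonneg.2 hμ) hs.1.le hs.2.le
  have hcoef : μ ^ 2 / (μ + 1) * (μ - 1) * s = μ * ((μ - 1) * (μ - 1 + 1) / (μ - 1 + 2) * s) := by
    rw [show μ - 1 + 1 = μ by ring, show μ - 1 + 2 = μ + 1 by ring]
    field_simp
  refine div_nonpos_of_nonpos_of_nonneg (mul_nonpos_of_nonneg_of_nonpos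
    (rpow_nonneg hs.1.le _) ?_) (sq_nonneg _)
  rw [hcoef, sub_nonpos]
  exact mul_le_mul_of_nonneg_left (by linarith) (by linarith)

theorem refinedBinomial_le_one_add_rpow {μ t : ℝ} (hμ : 1 ≤ μ) (ht0 : 0 ≤ t) (ht1 : t ≤ 1) :
    1 + μ ^ 2 / (μ + 1) * t + (2 ^ μ - μ ^ 2 / (μ + 1) - 1) * t ^ μ ≤ (1 + t) ^ μ := by
  rcases ht0.eq_or_lt with rfl | ht0
  · simp [zero_rpow (by linarith : μ ≠ 0)]
  have hratio := antitoneOn_refinedBinomialRatio hμ ⟨ht0, ht1⟩ ⟨one_pos, le_rfl⟩ ht1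
  have htμ := rpow_pos_of_pos ht0 μ
  simp only [refinedBinomialRatio, one_rpow, div_one] at hratio
  rw [le_div_iff₀ htμ] at hratio
  norm_num at hratio
  linarith

theorem refinedBinomial_le_add_rpow {μ a b : ℝ} (hμ : 1 ≤ μ) (hb : 0 ≤ b) (hba : b ≤ a) :
    a ^ μ + μ ^ 2 / (μ + 1) * a ^ (μ - 1) * b + (2 ^ μ - μ ^ 2 / (μ + 1) - 1) * b ^ μ ≤
      (a + b) ^ μ := by
  rcases (hb.trans hba).eq_or_lt with rfl | ha
  · obtain rfl : b = 0 := le_antisymm hba hb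
    simp [zero_rpow (by linarith : μ ≠ 0)]
  have hpow : a ^ μ = a ^ (μ - 1) * a := by rw [← rpow_add_one ha.ne']; ring_nf
  calc a ^ μ + μ ^ 2 / (μ + 1) * a ^ (μ - 1) * b + (2 ^ μ - μ ^ 2 / (μ + 1) - 1) * b ^ μ
      = a ^ μ * (1 + μ ^ 2 / (μ + 1) * (b / a) + (2 ^ μ - μ ^ 2 / (μ + 1) - 1) * (b / a) ^ μ) := by
        rw [div_rpow hb ha.le]
        field_simp
        rw [hpow]
        ring
    _ ≤ a ^ μ * (1 + b / a) ^ μ := mul_le_mul_of_nonneg_left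
        (refinedBinomial_le_one_add_rpow hμ (div_nonneg hb ha.le) ((div_le_one ha).2 hba))
        (rpow_nonneg ha.le μ)
    _ = (a + b) ^ μ := by
        rw [← mul_rpow ha.le (by positivity)]
        field_simp

theorem monotoneOn_of_sqrt_superadditive {f : ℝ → ℝ} (hf0 : ∀ t ∈ Icc (0 : ℝ) 1, 0 ≤ f t)
    (hsuper : ∀ x y : ℝ, 0 ≤ x → 0 ≤ y → x ^ 2 + y ^ 2 ≤ 1 → f x + f y ≤ f √(x ^ 2 + y ^ 2)) :
    MonotoneOn f (Icc 0 1) := by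
  intro y ⟨hy0, _⟩ x ⟨_, hx1⟩ hyx
  set a := √(x ^ 2 - y ^ 2)
  have ha2 : a ^ 2 = x ^ 2 - y ^ 2 := sq_sqrt (by nlinarith)
  have hfa : 0 ≤ f a := hf0 a ⟨sqrt_nonneg _, by nlinarith [sqrt_nonneg (x ^ 2 - y ^ 2)]⟩
  have hsum := hsuper a y (sqrt_nonneg _) hy0 (by nlinarith)
  rw [ha2, sub_add_cancel, sqrt_sq (hy0.trans hyx)] at hsum
  linarith

theorem stmt_13_general (f : ℝ → ℝ)
    (hf0 : ∀ t ∈ Set.Icc (0 : ℝ) 1, 0 ≤ f t)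
    (hsuper : ∀ x y : ℝ, 0 ≤ x → 0 ≤ y → x ^ 2 + y ^ 2 ≤ 1 →
      f (Real.sqrt (x ^ 2 + y ^ 2)) ≥ f x + f y)
    (μ : ℝ) (hμ : 1 ≤ μ)
    (x y : ℝ) (hy0 : 0 ≤ y) (hyx : y ≤ x) (hxy : x ^ 2 + y ^ 2 ≤ 1) :
    f (Real.sqrt (x ^ 2 + y ^ 2)) ^ μ ≥
      f x ^ μ + (μ ^ 2 / (μ + 1)) * f x ^ (μ - 1) * f y
        + (2 ^ μ - μ ^ 2 / (μ + 1) - 1) * f y ^ μ := by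
  have hx1 : x ≤ 1 := by nlinarith
  have hfy : 0 ≤ f y := hf0 y ⟨hy0, hyx.trans hx1⟩
  have hfyx : f y ≤ f x := monotoneOn_of_sqrt_superadditive hf0 hsuper
    ⟨hy0, hyx.trans hx1⟩ ⟨hy0.trans hyx, hx1⟩ hyx
  calc f x ^ μ + μ ^ 2 / (μ + 1) * f x ^ (μ - 1) * f y
        + (2 ^ μ - μ ^ 2 / (μ + 1) - 1) * f y ^ μ
      ≤ (f x + f y) ^ μ := refinedBinomial_le_add_rpow hμ hfy hfyx
    _ ≤ f √(x ^ 2 + y ^ 2) ^ μ :=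
        rpow_le_rpow (by linarith) (hsuper x y (hy0.trans hyx) hy0 hxy) (by linarith)

theorem stmt_13 (f : ℝ → ℝ)
    (hf0 : ∀ t ∈ Set.Icc (0 : ℝ) 1, 0 ≤ f t)
    (hsuper : ∀ x y : ℝ, 0 ≤ x → 0 ≤ y → x ^ 2 + y ^ 2 ≤ 1 →
      f (Real.sqrt (x ^ 2 + y ^ 2)) ≥ f x + f y)
    (μ : ℝ) (hμ : 1 ≤ μ)
    (x y : ℝ) (hy0 : 0 ≤ y) (hyx : y ≤ x) (hxy : x ^ 2 + y ^ 2 ≤ 1)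
    (hfx : 0 < f x) :
    f (Real.sqrt (x ^ 2 + y ^ 2)) ^ μ ≥
      f x ^ μ + (μ ^ 2 / (μ + 1)) * f x ^ (μ - 1) * f y
        + (2 ^ μ - μ ^ 2 / (μ + 1) - 1) * f y ^ μ :=
  stmt_13_general f hf0 hsuper μ hμ x y hy0 hyx hxy
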